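/- Let n ≥ 2 be an integer and set W(n) = (−A⁶−A⁻⁶)·N(n) + (−A⁴−A⁻⁴+2)·A⁶·P(n) in ℤ[A, A⁻¹]. Then the terms of highest degree in the two summands cancel, and h(W(n)) = 3n+8, ℓ(W(n)) = −n−12, so that span(W(n)) = 4n+20; in particular span(W(n)) > 16. -/

import Mathlib

open LaurentPolynomial Finset

/-- The coefficient of `A^k` in the Laurent polynomial `y ∈ ℤ[A,A⁻¹]`. -/
noncomputable def coeffA (y : LaurentPolynomial ℤ) (k : ℤ) : ℤ := y.coeff k

/-- `y` has highest exponent `d`, with coefficient `c` (nonzero) on `A^d`. -/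
def HiCoeff (y : LaurentPolynomial ℤ) (d c : ℤ) : Prop :=
  coeffA y d = c ∧ c ≠ 0 ∧ ∀ k, d < k → coeffA y k = 0

/-- `y` has lowest exponent `d`, with coefficient `c` (nonzero) on `A^d`. -/
def LoCoeff (y : LaurentPolynomial ℤ) (d c : ℤ) : Prop :=
  coeffA y d = c ∧ c ≠ 0 ∧ ∀ k, k < d → coeffA y k = 0

/-- `y` has highest exponent `d`: `h(y) = d`. -/
def IsHi (y : LaurentPolynomial ℤ) (d : ℤ) : Prop :=
  coeffA y d ≠ 0 ∧ ∀ k, d < k → coeffA y k = 0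

/-- `y` has lowest exponent `d`: `ℓ(y) = d`. -/
def IsLo (y : LaurentPolynomial ℤ) (d : ℤ) : Prop :=
  coeffA y d ≠ 0 ∧ ∀ k, k < d → coeffA y k = 0

/-- P(n) = A^{−n−6} + (A⁴+A⁻⁴)·Σ_{k=1}^{n} (−1)^k A^{4k−n−2} -/
noncomputable def P (n : ℕ) : LaurentPolynomial ℤ :=
  T (-(n:ℤ) - 6) +
    (T 4 + T (-4)) * ∑ k ∈ Finset.Icc 1 n, (-1 : LaurentPolynomial ℤ)^k * T (4*(k:ℤ) - n - 2)

/-- P̄(n) = A^{n+6} + (A⁴+A⁻⁴)·Σ_{k=1}^{n} (−1)^k A^{−4k+n+2} -/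
noncomputable def Pbar (n : ℕ) : LaurentPolynomial ℤ :=
  T ((n:ℤ) + 6) +
    (T 4 + T (-4)) * ∑ k ∈ Finset.Icc 1 n, (-1 : LaurentPolynomial ℤ)^k * T (-4*(k:ℤ) + n + 2)

/-- Q(j) = −A^{2−j} + Σ_{k=0}^{j} (−1)^{k+1} A^{4k−j−2} -/
noncomputable def Q (j : ℕ) : LaurentPolynomial ℤ :=
  -T (2 - (j:ℤ)) + ∑ k ∈ Finset.range (j+1), (-1 : LaurentPolynomial ℤ)^(k+1) * T (4*(k:ℤ) - j - 2)

/-- N(j) = (−A⁶−A⁻⁶)·(−A³)^j + (−A⁴−A⁻⁴+2)·Q(j) -/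
noncomputable def N (j : ℕ) : LaurentPolynomial ℤ :=
  (-T 6 - T (-6)) * (-T 3)^j + (-T 4 - T (-4) + 2) * Q j

/-- R(m) = A^{−m−5} + (A⁴+A⁻⁴)·Σ_{k=1}^{m−1} (−1)^k A^{4k−m−1} -/
noncomputable def Rm (m : ℕ) : LaurentPolynomial ℤ :=
  T (-(m:ℤ) - 5) +
    (T 4 + T (-4)) * ∑ k ∈ Finset.Icc 1 (m-1), (-1 : LaurentPolynomial ℤ)^k * T (4*(k:ℤ) - m - 1)

/-!
Multiplying by `1 + A⁴` telescopes the alternating sums in `P(n)` and `Q(n)`, which gives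
`(1 + A⁴) W(n) = (-A³)ⁿ c(A) + A⁻ⁿ⁻⁴ d(A)` with `c = 2A¹² + 3A⁴ + 2A⁻⁴ + A⁻¹²` (`highPart`) and
`d` (`lowPart`) running from `-A⁻⁸` to `-A¹⁶`. For `n ≥ 1` the first summand alone carries the
highest term `2(-1)ⁿ A³ⁿ⁺¹²` and the second alone the lowest term `-A⁻ⁿ⁻¹²`, so no cancellation
has to be controlled. Since `ℤ[A, A⁻¹]` is a domain, `h` and `ℓ` are additive on products, and
dividing by `1 + A⁴` gives `h(W(n)) = 3n + 8` and `ℓ(W(n)) = -n - 12`.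
-/

section

variable {f g : LaurentPolynomial ℤ} {d e a b : ℤ}

theorem coeffA_add (k : ℤ) : coeffA (f + g) k = coeffA f k + coeffA g k := rfl

theorem coeffA_neg (k : ℤ) : coeffA (-f) k = -coeffA f k := rfl

theorem le_of_mem_support (hf : ∀ k, d < k → coeffA f k = 0) ⦃k : ℤ⦄
    (hk : k ∈ f.coeff.support) : k ≤ d :=
  not_lt.1 fun h => Finsupp.mem_support_iff.1 hk (hf k h)

theorem HiCoeff.isHi (hf : HiCoeff f d a) : IsHi f d := ⟨hf.1 ▸ hf.2.1, hf.2.2⟩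

theorem HiCoeff.unique {d' a' : ℤ} (hf : HiCoeff f d a) (hf' : HiCoeff f d' a') : d = d' := by
  by_contra hne
  rcases Ne.lt_or_gt hne with h | h
  · exact hf'.2.1 (hf'.1 ▸ hf.2.2 d' h)
  · exact hf.2.1 (hf.1 ▸ hf'.2.2 d h)

theorem hiCoeff_T (d : ℤ) : HiCoeff (T d) d 1 :=
  ⟨by simp [coeffA], one_ne_zero, fun k hk => by simp [coeffA, hk.ne]⟩

theorem HiCoeff.neg (hf : HiCoeff f d a) : HiCoeff (-f) d (-a) :=
  ⟨by rw [coeffA_neg, hf.1], neg_ne_zero.2 hf.2.1,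
    fun k hk => by rw [coeffA_neg, hf.2.2 k hk, neg_zero]⟩

theorem HiCoeff.add_of_lt (hf : HiCoeff f d a) (hg : HiCoeff g e b) (hlt : e < d) :
    HiCoeff (f + g) d a :=
  ⟨by rw [coeffA_add, hf.1, hg.2.2 d hlt, add_zero], hf.2.1,
    fun k hk => by rw [coeffA_add, hf.2.2 k hk, hg.2.2 k (hlt.trans hk), add_zero]⟩

theorem HiCoeff.mul (hf : HiCoeff f d a) (hg : HiCoeff g e b) :
    HiCoeff (f * g) (d + e) (a * b) := by
  classical
  have hf_le := le_of_mem_support hf.2.2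
  have hg_le := le_of_mem_support hg.2.2
  refine ⟨?_, mul_ne_zero hf.2.1 hg.2.1, fun k hk => ?_⟩
  · rw [coeffA, AddMonoidAlgebra.coeff_mul, Finsupp.sum, sum_eq_single d]
    · rw [Finsupp.sum, sum_eq_single e, if_pos rfl, ← coeffA, ← coeffA, hf.1, hg.1]
      · exact fun j hj hne => if_neg fun h => hne (by omega)
      · exact fun h => by simp [Finsupp.notMem_support_iff.1 h]
    · refine fun i hi hne => sum_eq_zero fun j hj => if_neg fun h => ?_
      have := hf_le hi
      have := hg_le hj
      omega
    · exact fun h => by simp [Finsupp.notMem_support_iff.1 h]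
  · rw [coeffA, AddMonoidAlgebra.coeff_mul]
    refine sum_eq_zero fun i hi => sum_eq_zero fun j hj => if_neg fun h => ?_
    have := hf_le hi
    have := hg_le hj
    omega

theorem HiCoeff.pow (hf : HiCoeff f d a) (n : ℕ) : HiCoeff (f ^ n) (n * d) (a ^ n) := by
  induction n with
  | zero => simpa using hiCoeff_T 0
  | succ n ih => simpa [pow_succ, add_mul] using ih.mul hf

theorem exists_hiCoeff (hf : f ≠ 0) : ∃ d a, HiCoeff f d a := by
  have hne : f.coeff.support.Nonempty :=
    Finsupp.support_nonempty_iff.2 fun h => hf (by ext; simp [h])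
  refine ⟨_, _, rfl, Finsupp.mem_support_iff.1 (f.coeff.support.max'_mem hne), fun k hk => ?_⟩
  by_contra h
  exact not_le.2 hk (f.coeff.support.le_max' k (Finsupp.mem_support_iff.2 h))

theorem IsHi.of_hiCoeff_mul {c : ℤ} (hfg : HiCoeff (f * g) d c) (hf : HiCoeff f e a) :
    IsHi g (d - e) := by
  have hg : g ≠ 0 := by
    rintro rfl
    exact hfg.2.1 (by simpa [coeffA] using hfg.1.symm)
  obtain ⟨e', b, hg'⟩ := exists_hiCoeff hg
  rw [hfg.unique (hf.mul hg'), add_sub_cancel_left]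
  exact hg'.isHi

theorem loCoeff_iff_hiCoeff_invert : LoCoeff f d a ↔ HiCoeff (invert f) (-d) a := by
  simp only [LoCoeff, HiCoeff, coeffA, invert_apply, neg_neg,
    neg_surjective.forall (p := fun k => -d < k → _), neg_lt_neg_iff]

theorem isLo_iff_isHi_invert : IsLo f d ↔ IsHi (invert f) (-d) := by
  simp only [IsLo, IsHi, coeffA, invert_apply, neg_neg,
    neg_surjective.forall (p := fun k => -d < k → _), neg_lt_neg_iff]

theorem loCoeff_T (d : ℤ) : LoCoeff (T d) d 1 :=
  loCoeff_iff_hiCoeff_invert.2 (by simpa using hiCoeff_T (-d))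

theorem LoCoeff.neg (hf : LoCoeff f d a) : LoCoeff (-f) d (-a) := by
  rw [loCoeff_iff_hiCoeff_invert, map_neg]
  exact (loCoeff_iff_hiCoeff_invert.1 hf).neg

theorem LoCoeff.add_of_lt (hf : LoCoeff f d a) (hg : LoCoeff g e b) (hlt : d < e) :
    LoCoeff (f + g) d a := by
  rw [loCoeff_iff_hiCoeff_invert, map_add]
  exact (loCoeff_iff_hiCoeff_invert.1 hf).add_of_lt (loCoeff_iff_hiCoeff_invert.1 hg)
    (neg_lt_neg hlt)

theorem LoCoeff.mul (hf : LoCoeff f d a) (hg : LoCoeff g e b) :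
    LoCoeff (f * g) (d + e) (a * b) := by
  rw [loCoeff_iff_hiCoeff_invert, map_mul, neg_add]
  exact (loCoeff_iff_hiCoeff_invert.1 hf).mul (loCoeff_iff_hiCoeff_invert.1 hg)

theorem LoCoeff.pow (hf : LoCoeff f d a) (n : ℕ) : LoCoeff (f ^ n) (n * d) (a ^ n) := by
  rw [loCoeff_iff_hiCoeff_invert, map_pow, ← mul_neg]
  exact (loCoeff_iff_hiCoeff_invert.1 hf).pow n

theorem IsLo.of_loCoeff_mul {c : ℤ} (hfg : LoCoeff (f * g) d c) (hf : LoCoeff f e a) :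
    IsLo g (d - e) := by
  rw [isLo_iff_isHi_invert, neg_sub, ← neg_sub_neg]
  have hfg' := loCoeff_iff_hiCoeff_invert.1 hfg
  rw [map_mul] at hfg'
  exact IsHi.of_hiCoeff_mul hfg' (loCoeff_iff_hiCoeff_invert.1 hf)

end

theorem hiCoeff_one_add_T_four : HiCoeff (1 + T 4) 4 1 := by
  rw [add_comm, ← T_zero]
  exact (hiCoeff_T 4).add_of_lt (hiCoeff_T 0) (by norm_num)

theorem loCoeff_one_add_T_four : LoCoeff (1 + T 4) 0 1 := by
  rw [← T_zero]
  exact (loCoeff_T 0).add_of_lt (loCoeff_T 4) (by norm_num)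

theorem neg_T_pow (a : ℤ) (n : ℕ) :
    (-T a : LaurentPolynomial ℤ) ^ n = (-1) ^ n * T (n * a) := by
  rw [neg_pow, T_pow]

theorem one_add_T_four_mul_sum (m : ℕ) (e : ℤ) :
    (1 + T 4) * ∑ k ∈ range m, (-1 : LaurentPolynomial ℤ) ^ k * T (4 * k + e) =
      T e * (1 - (-T 4) ^ m) := by
  have : ∑ k ∈ range m, (-1 : LaurentPolynomial ℤ) ^ k * T (4 * k + e) =
      T e * ∑ k ∈ range m, (-T 4) ^ k := by
    rw [mul_sum]
    refine sum_congr rfl fun k _ => ?_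
    rw [neg_T_pow, mul_left_comm, ← T_add, add_comm, mul_comm (k : ℤ)]
  rw [this, mul_left_comm, ← mul_neg_geom_sum, sub_neg_eq_add]

noncomputable def alternatingSum (n : ℕ) : LaurentPolynomial ℤ :=
  ∑ k ∈ range (n + 1), (-1) ^ k * T (4 * k + (-n - 2))

theorem Q_eq_alternatingSum (n : ℕ) : Q n = -T (2 - n) - alternatingSum n := by
  rw [Q, alternatingSum, sub_eq_add_neg (-T _), ← sum_neg_distrib]
  congr 1
  refine sum_congr rfl fun k _ => ?_
  rw [pow_succ]
  ring_nf

theorem P_eq_alternatingSum (n : ℕ) :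
    P n = T (-n - 6) + (T 4 + T (-4)) * (alternatingSum n - T (-n - 2)) := by
  rw [P, alternatingSum, sum_range_eq_add_Ico _ (by omega : 0 < n + 1), Ico_add_one_right_eq_Icc]
  simp only [pow_zero, Nat.cast_zero, mul_zero, zero_add, one_mul, add_sub_cancel_left]
  congr 2
  refine sum_congr rfl fun k _ => ?_
  ring_nf

noncomputable def highPart : LaurentPolynomial ℤ :=
  2 • T 12 + 3 • T 4 + 2 • T (-4) + T (-12)

noncomputable def lowPart : LaurentPolynomial ℤ :=
  -T 16 + T 12 - T 8 + 2 • T 4 - 1 + T (-4) - T (-8)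

theorem one_add_T_four_mul_W (n : ℕ) :
    (1 + T 4) * ((-T 6 - T (-6)) * N n + (-T 4 - T (-4) + 2) * T 6 * P n) =
      (-T 3) ^ n * highPart + T (-n - 4) * lowPart := by
  have hS : (1 + T 4) * alternatingSum n = T (-n - 2) * (1 - (-T 4) ^ (n + 1)) :=
    one_add_T_four_mul_sum (n + 1) (-n - 2)
  rw [N, Q_eq_alternatingSum, P_eq_alternatingSum, highPart, lowPart]
  -- the multiplier is the coefficient of `alternatingSum n` in `W(n)`
  linear_combination (norm := skip)
    ((-T 6 - T (-6)) * (-(-T 4 - T (-4) + 2)) + (-T 4 - T (-4) + 2) * T 6 * (T 4 + T (-4))) * hS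
  simp only [neg_T_pow, pow_succ]
  ring_nf
  simp only [← T_add, T_pow]
  ring_nf

theorem hiCoeff_highPart : HiCoeff highPart 12 2 := by
  refine ⟨by simp [coeffA, highPart, -nsmul_eq_mul], two_ne_zero, fun k hk => ?_⟩
  simp [coeffA, highPart, -nsmul_eq_mul]
  split_ifs <;> omega

theorem loCoeff_highPart : LoCoeff highPart (-12) 1 := by
  refine ⟨by simp [coeffA, highPart, -nsmul_eq_mul], one_ne_zero, fun k hk => ?_⟩
  simp [coeffA, highPart, -nsmul_eq_mul]
  split_ifs <;> omega

theorem hiCoeff_lowPart : HiCoeff lowPart 16 (-1) := by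
  refine ⟨by simp [coeffA, lowPart, -nsmul_eq_mul, -T_zero, ← T_zero], by norm_num,
    fun k hk => ?_⟩
  simp [coeffA, lowPart, -nsmul_eq_mul, -T_zero, ← T_zero]
  split_ifs <;> omega

theorem loCoeff_lowPart : LoCoeff lowPart (-8) (-1) := by
  refine ⟨by simp [coeffA, lowPart, -nsmul_eq_mul, -T_zero, ← T_zero], by norm_num,
    fun k hk => ?_⟩
  simp [coeffA, lowPart, -nsmul_eq_mul, -T_zero, ← T_zero]
  split_ifs <;> omega

/-- for n ≥ 2, W(n) = (−A⁶−A⁻⁶)·N(n) + (−A⁴−A⁻⁴+2)·A⁶·P(n)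
has h = 3n+8, ℓ = −n−12, span 4n+20 > 16. -/
theorem stmt_4 (n : ℕ) (hn : 2 ≤ n)
    (W : LaurentPolynomial ℤ)
    (hW : W = (-T 6 - T (-6)) * N n + (-T 4 - T (-4) + 2) * T 6 * P n) :
    IsHi W (3*(n:ℤ) + 8) ∧ IsLo W (-(n:ℤ) - 12) ∧
    (3*(n:ℤ) + 8) - (-(n:ℤ) - 12) = 4*(n:ℤ) + 20 ∧
    4*(n:ℤ) + 20 > 16 := by
  have hτ : (1 + T 4) * W = (-T 3) ^ n * highPart + T (-n - 4) * lowPart :=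
    hW ▸ one_add_T_four_mul_W n
  have hHi : HiCoeff ((1 + T 4) * W) (n * 3 + 12) ((-1) ^ n * 2) := by
    rw [hτ]
    exact (((hiCoeff_T 3).neg.pow n).mul hiCoeff_highPart).add_of_lt
      ((hiCoeff_T _).mul hiCoeff_lowPart) (by omega)
  have hLo : LoCoeff ((1 + T 4) * W) (-n - 4 + -8) (1 * -1) := by
    rw [hτ, add_comm]
    exact ((loCoeff_T _).mul loCoeff_lowPart).add_of_lt
      (((loCoeff_T 3).neg.pow n).mul loCoeff_highPart) (by omega)
  refine ⟨?_, ?_, by ring, by omega⟩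
  · convert IsHi.of_hiCoeff_mul hHi hiCoeff_one_add_T_four using 1
    ring
  · convert IsLo.of_loCoeff_mul hLo loCoeff_one_add_T_four using 1
    ring
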